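/- arXiv:1904.04954 — 4 statements merged into one kernel-verified Lean document; each statement's English description precedes it below -/
import Mathlib

section
/- Pointwise limit under knot coalescence: suppose all c_i = 1, and fix t ∈ (a_0, a_n) with 0 ≤ k < n and k+1 < n (so a_k is not an endpoint knot being moved to a_n). As the knot a_k tends to a_{k+1} (all other data fixed), the GT-Bézier curve value P(t) converges to the value of the GT-Bézier curve of degree n-1 with knots {a_0,…,a_{k-1},a_{k+1},…,a_n}, weights {ω_0,…,ω_{k-1}, ω_k+ω_{k+1}, ω_{k+2},…,ω_n}, and control points {b_0,…,b_{k-1}, (ω_k b_k + ω_{k+1} b_{k+1})/(ω_k+ω_{k+1}), b_{k+2},…,b_n}. -/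
open Real Finset Filter

/-!
At `s = a_{k+1}` the basis values of the knots `k` and `k + 1` coincide, so their two terms in
the rational combination merge into one term of weight `ω_k + ω_{k+1}` at the weighted average
of `b_k` and `b_{k+1}`. The limit is then the value at `s = a_{k+1}`, since `s ↦ β_s(t)` is
continuous (the bases `t - a₀`, `aₙ - t` are positive) and the denominator is positive.
-/

theorem Finset.sum_erase_merge {ι M : Type*} [DecidableEq ι] [AddCommMonoid M] {s : Finset ι}
    {j k : ι} (hj : j ∈ s) (hk : k ∈ s) (hjk : j ≠ k) (f : ι → M) :
    ∑ i ∈ s.erase k, (if i = j then f k + f j else f i) = ∑ i ∈ s, f i :=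
  calc ∑ i ∈ s.erase k, (if i = j then f k + f j else f i)
      _ = ∑ i ∈ s.erase k, ((if i = j then f k else 0) + f i) :=
        sum_congr rfl fun i _ => by split_ifs with h <;> simp [h]
      _ = f k + ∑ i ∈ s.erase k, f i := by
        rw [sum_add_distrib, sum_ite_eq', if_pos (mem_erase.2 ⟨hjk, hj⟩)]
      _ = ∑ i ∈ s, f i := add_sum_erase s f hk

theorem Finset.centerMass_erase_merge {ι R E : Type*} [Field R] [AddCommGroup E] [Module R E]
    [DecidableEq ι] {s : Finset ι} {j k : ι} (hj : j ∈ s) (hk : k ∈ s) (hjk : j ≠ k)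
    {ω g : ι → R} (hg : g k = g j) (hω : ω k + ω j ≠ 0) (z : ι → E) :
    (s.erase k).centerMass (fun i => (if i = j then ω k + ω j else ω i) * g i)
        (fun i => if i = j then (ω k + ω j)⁻¹ • (ω k • z k + ω j • z j) else z i) =
      s.centerMass (fun i => ω i * g i) z := by
  have hweight (i : ι) : (if i = j then ω k + ω j else ω i) * g i =
      if i = j then ω k * g k + ω j * g j else ω i * g i := by
    split_ifs with h
    · rw [h, hg, add_mul]
    · rfl
  have hterm (i : ι) : ((if i = j then ω k + ω j else ω i) * g i) •
      (if i = j then (ω k + ω j)⁻¹ • (ω k • z k + ω j • z j) else z i) =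
      if i = j then (ω k * g k) • z k + (ω j * g j) • z j else (ω i * g i) • z i := by
    split_ifs with h
    · rw [h, hg, mul_comm, mul_smul, smul_inv_smul₀ hω]
      module
    · rfl
  simp only [centerMass, hterm]
  simp only [hweight]
  rw [sum_erase_merge hj hk hjk (fun i => ω i * g i),
    sum_erase_merge hj hk hjk (fun i => (ω i * g i) • z i)]

theorem Filter.Tendsto.centerMass {α ι R E : Type*} [Field R] [TopologicalSpace R]
    [ContinuousAdd R] [ContinuousInv₀ R] [AddCommGroup E] [Module R E] [TopologicalSpace E]
    [ContinuousAdd E] [ContinuousSMul R E] {l : Filter α} {s : Finset ι} {w : ι → α → R}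
    {z : ι → α → E} {w₀ : ι → R} {z₀ : ι → E}
    (hw : ∀ i ∈ s, Tendsto (w i) l (nhds (w₀ i)))
    (hz : ∀ i ∈ s, Tendsto (z i) l (nhds (z₀ i))) (h₀ : ∑ i ∈ s, w₀ i ≠ 0) :
    Tendsto (fun x => s.centerMass (fun i => w i x) (fun i => z i x)) l
      (nhds (s.centerMass w₀ z₀)) :=
  ((tendsto_finsetSum s hw).inv₀ h₀).smul
    (tendsto_finsetSum s fun i hi => (hw i hi).smul (hz i hi))

/-- The paper's `β_a(t)` for knots in `[a₀, aₙ]`. -/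
noncomputable def gtBasis (a₀ aₙ a t : ℝ) : ℝ :=
  (t - a₀) ^ (a - a₀) * (aₙ - t) ^ (aₙ - a)

section gtBasis

variable {a₀ aₙ t : ℝ}

theorem gtBasis_pos (ht : t ∈ Set.Ioo a₀ aₙ) (a : ℝ) : 0 < gtBasis a₀ aₙ a t := by
  have := sub_pos.2 ht.1
  have := sub_pos.2 ht.2
  unfold gtBasis
  positivity

theorem continuous_gtBasis_knot (ht : t ∈ Set.Ioo a₀ aₙ) :
    Continuous fun a => gtBasis a₀ aₙ a t :=
  ((continuous_const_rpow (sub_pos.2 ht.1).ne').comp (continuous_id.sub continuous_const)).mul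
    ((continuous_const_rpow (sub_pos.2 ht.2).ne').comp (continuous_const.sub continuous_id))

end gtBasis

theorem gt_bezier_knot_coalescence_general (n d k : ℕ) (a ω : ℕ → ℝ) (b : ℕ → Fin d → ℝ)
    (hw : ∀ i, i ≤ n → 0 < ω i)
    (hk : k + 1 < n)
    (t : ℝ) (ht : t ∈ Set.Ioo (a 0) (a n))
    (βf : ℝ → ℝ)
    (hβ : ∀ x, βf x = (t - a 0) ^ (x - a 0) * (a n - t) ^ (a n - x)) :
    Filter.Tendsto
      (fun s : ℝ =>
        (∑ i ∈ Finset.range (n + 1), ω i * βf (if i = k then s else a i))⁻¹ •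
          ∑ i ∈ Finset.range (n + 1), (ω i * βf (if i = k then s else a i)) • b i)
      (nhdsWithin (a (k + 1)) (Set.Iio (a (k + 1))))
      (nhds
        ((∑ i ∈ (Finset.range (n + 1)).erase k,
            (if i = k + 1 then ω k + ω (k + 1) else ω i) * βf (a i))⁻¹ •
          ∑ i ∈ (Finset.range (n + 1)).erase k,
            ((if i = k + 1 then ω k + ω (k + 1) else ω i) * βf (a i)) •
              (if i = k + 1 then
                (ω k + ω (k + 1))⁻¹ • (ω k • b k + ω (k + 1) • b (k + 1))
              else b i))) := by
  obtain rfl : βf = fun x => gtBasis (a 0) (a n) x t := funext hβ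
  have hk_mem : k ∈ range (n + 1) := mem_range.2 (by omega)
  have hk1_mem : k + 1 ∈ range (n + 1) := mem_range.2 (by omega)
  have hlim : Tendsto (fun s => (range (n + 1)).centerMass
        (fun i => ω i * gtBasis (a 0) (a n) (if i = k then s else a i) t) b)
      (nhdsWithin (a (k + 1)) (Set.Iio (a (k + 1))))
      (nhds ((range (n + 1)).centerMass
        (fun i => ω i * gtBasis (a 0) (a n) (if i = k then a (k + 1) else a i) t) b)) := by
    refine Tendsto.centerMass (fun i _ => ?_) (fun _ _ => tendsto_const_nhds)
      (sum_pos (fun i hi => ?_) ⟨k, hk_mem⟩).ne'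
    · have hcont : Continuous fun s => ω i * gtBasis (a 0) (a n) (if i = k then s else a i) t :=
        continuous_const.mul ((continuous_gtBasis_knot ht).comp
          (continuous_if_const _ (fun _ => continuous_id) fun _ => continuous_const))
      exact hcont.continuousWithinAt
    · exact mul_pos (hw i (by simpa [Nat.lt_succ_iff] using hi)) (gtBasis_pos ht _)
  refine hlim.mono_right (le_of_eq (congrArg nhds ?_))
  rw [← centerMass_erase_merge hk1_mem hk_mem (by omega) (by simp)
    (add_pos (hw k (by omega)) (hw (k + 1) (by omega))).ne']
  refine centerMass_congr_weights fun i hi => ?_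
  rw [if_neg (ne_of_mem_erase hi)]

theorem gt_bezier_knot_coalescence (n d k : ℕ) (a ω : ℕ → ℝ) (b : ℕ → Fin d → ℝ)
    (ha : a 0 < a n)
    (hmono : ∀ i j, i ≤ j → j ≤ n → a i ≤ a j)
    (hw : ∀ i, i ≤ n → 0 < ω i)
    (hk : k + 1 < n)
    (t : ℝ) (ht : t ∈ Set.Ioo (a 0) (a n))
    (βf : ℝ → ℝ)
    (hβ : ∀ x, βf x = (t - a 0) ^ (x - a 0) * (a n - t) ^ (a n - x)) :
    Filter.Tendsto
      (fun s : ℝ =>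
        (∑ i ∈ Finset.range (n + 1), ω i * βf (if i = k then s else a i))⁻¹ •
          ∑ i ∈ Finset.range (n + 1), (ω i * βf (if i = k then s else a i)) • b i)
      (nhdsWithin (a (k + 1)) (Set.Iio (a (k + 1))))
      (nhds
        ((∑ i ∈ (Finset.range (n + 1)).erase k,
            (if i = k + 1 then ω k + ω (k + 1) else ω i) * βf (a i))⁻¹ •
          ∑ i ∈ (Finset.range (n + 1)).erase k,
            ((if i = k + 1 then ω k + ω (k + 1) else ω i) * βf (a i)) •
              (if i = k + 1 then
                (ω k + ω (k + 1))⁻¹ • (ω k • b k + ω (k + 1) • b (k + 1))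
              else b i))) :=
  gt_bezier_knot_coalescence_general n d k a ω b hw hk t ht βf hβ
end

section
/- Descartes-type bound for GT-Bézier curves with rational knot differences: let a_i - a_0 = p_i/q_i ∈ ℚ≥0 for i = 0,…,n and let q be a common denominator so that q(a_i - a_0) ∈ ℕ. Then for any real numbers y_0, …, y_n (signed heights of control points relative to a line), the number of t ∈ (a_0, a_n) with Σ_i ω_i c_i y_i (t-a_0)^{a_i-a_0}(a_n-t)^{a_n-a_i} = 0 is at most the number of t with Σ_i ω_i c_i y_i u(t)^{q(a_i-a_0)} = 0 where u(t) = ((t-a_0)/(a_n-t))^{1/q}, and hence (by Descartes' rule of signs) at most the number of strict sign changes in the sequence (y_0, …, y_n). -/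
/-!
On `(a₀, aₙ)` the factor `(aₙ - t) ^ (aₙ - a₀)` pulls out of the curve's sum, leaving
`∑ ωᵢ cᵢ yᵢ v ^ (aᵢ - a₀)` with `v = (t - a₀) / (aₙ - t) = u ^ q`, and `t ↦ v` maps `(a₀, aₙ)`
bijectively onto `(0, ∞)`. What remains is Descartes' rule for `f v = ∑ c_e v ^ e` with real
exponents (Laguerre's argument). Merge equal exponents; positive weights keep the signs. If
`c_p, c_r` is an adjacent sign change and `p < θ < r`, Rolle's theorem for `v ^ (-θ) f` bounds the
positive zeros of `f` by one more than those of `∑ c_e (e - θ) v ^ e`, and multiplying `c_e` by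
`e - θ` flips exactly the signs below `θ`, which removes the sign change at `(p, r)` and no other.
-/

open Real Finset

/-- Number of strict sign changes of the sequence `y 0, …, y n` (zeros skipped). -/
noncomputable def signChanges (y : ℕ → ℝ) (n : ℕ) : ℕ :=
  Set.ncard {p : ℕ × ℕ | p.1 < p.2 ∧ p.2 ≤ n ∧ y p.1 * y p.2 < 0 ∧
    ∀ l, p.1 < l → l < p.2 → y l = 0}

theorem ne_of_mul_neg {α : Type*} {c : α → ℝ} {x y : α} (h : c x * c y < 0) : x ≠ y := by
  rintro rfl
  exact (mul_self_nonneg _).not_gt h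

theorem mul_neg_or_mul_neg_of_ne_zero {a b z : ℝ} (h : a * b < 0) (hz : z ≠ 0) :
    a * z < 0 ∨ z * b < 0 := by
  by_contra! hab
  nlinarith [mul_nonneg hab.1 hab.2, mul_self_pos.2 hz]

theorem mul_neg_of_mul_neg_of_mul_pos {a b d : ℝ} (h₁ : a * b < 0) (h₂ : 0 < a * d) :
    b * d < 0 := by
  nlinarith [mul_self_nonneg a, mul_pos_iff.1 h₂, mul_neg_iff.1 h₁]

section SignChanges

variable {α : Type*} [LinearOrder α] {c : α → ℝ}

/-- A chain of length `k + 1` witnesses `k` sign changes of `c`. -/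
def IsAltChain (c : α → ℝ) (l : List α) : Prop :=
  l.IsChain fun x y => x < y ∧ c x * c y < 0

theorem exists_adjacent_sign_change (T : Finset α) {x y : α}
    (hT : ∀ z, x < z → z < y → c z ≠ 0 → z ∈ T) (hxy : x < y) (h : c x * c y < 0) :
    ∃ p r, x ≤ p ∧ p < r ∧ r ≤ y ∧ c p * c r < 0 ∧ ∀ z, p < z → z < r → c z = 0 := by
  induction hN : #{z ∈ T | x < z ∧ z < y} using Nat.strong_induction_on generalizing x y with
  | _ N ih =>
  by_cases hz : ∃ z, x < z ∧ z < y ∧ c z ≠ 0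
  · obtain ⟨z, hxz, hzy, hcz⟩ := hz
    have hzT := hT z hxz hzy hcz
    rcases mul_neg_or_mul_neg_of_ne_zero h hcz with hxz' | hzy'
    · have hsub : {w ∈ T | x < w ∧ w < z} ⊂ {w ∈ T | x < w ∧ w < y} :=
        (ssubset_iff_of_subset fun w hw ↦ by
          simp only [mem_filter] at hw ⊢; exact ⟨hw.1, hw.2.1, hw.2.2.trans hzy⟩).2
          ⟨z, by simp [hzT, hxz, hzy]⟩
      obtain ⟨p, r, hp, hpr, hr, hc, hgap⟩ := ih _ (hN ▸ card_lt_card hsub)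
        (fun w hw hwz => hT w hw (hwz.trans hzy)) hxz hxz' rfl
      exact ⟨p, r, hp, hpr, hr.trans hzy.le, hc, hgap⟩
    · have hsub : {w ∈ T | z < w ∧ w < y} ⊂ {w ∈ T | x < w ∧ w < y} :=
        (ssubset_iff_of_subset fun w hw ↦ by
          simp only [mem_filter] at hw ⊢; exact ⟨hw.1, hxz.trans hw.2.1, hw.2.2⟩).2
          ⟨z, by simp [hzT, hxz, hzy]⟩
      obtain ⟨p, r, hp, hpr, hr, hc, hgap⟩ := ih _ (hN ▸ card_lt_card hsub)
        (fun w hzw hw => hT w (hxz.trans hzw) hw) hzy hzy' rfl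
      exact ⟨p, r, hxz.le.trans hp, hpr, hr, hc, hgap⟩
  · push Not at hz
    exact ⟨x, y, le_rfl, hxy, le_rfl, h, hz⟩

end SignChanges

def signChangePairs (y : ℕ → ℝ) (n : ℕ) : Set (ℕ × ℕ) :=
  {p | p.1 < p.2 ∧ p.2 ≤ n ∧ y p.1 * y p.2 < 0 ∧ ∀ l, p.1 < l → l < p.2 → y l = 0}

theorem finite_signChangePairs (y : ℕ → ℝ) (n : ℕ) : (signChangePairs y n).Finite :=
  ((Set.finite_Iic n).prod (Set.finite_Iic n)).subset fun _ hp ↦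
    ⟨(hp.1.trans_le hp.2.1).le, hp.2.1⟩

theorem IsAltChain.length_le_ncard_signChangePairs {y : ℕ → ℝ} {n x : ℕ} {l : List ℕ}
    (hl : IsAltChain y (x :: l)) (hn : ∀ i ∈ x :: l, i ≤ n) :
    l.length ≤ {p ∈ signChangePairs y n | x ≤ p.1}.ncard := by
  induction l generalizing x with
  | nil => exact Nat.zero_le _
  | cons x' l ih =>
    obtain ⟨⟨hxx', hyy'⟩, hl'⟩ := List.isChain_cons_cons.1 hl
    obtain ⟨p, r, hxp, hpr, hrx', hypr, hgap⟩ :=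
      exists_adjacent_sign_change (Finset.Ioo x x') (fun z hxz hzx' _ ↦ by simp [hxz, hzx'])
        hxx' hyy'
    have hrn : r ≤ n := hrx'.trans (hn x' (by simp))
    have hfin (z : ℕ) : {q ∈ signChangePairs y n | z ≤ q.1}.Finite :=
      (finite_signChangePairs y n).subset (Set.sep_subset _ _)
    calc (x' :: l).length = l.length + 1 := rfl
      _ ≤ {p ∈ signChangePairs y n | x' ≤ p.1}.ncard + 1 :=
          Nat.add_le_add_right (ih hl' fun i hi ↦ hn i (List.mem_cons_of_mem x hi)) 1
      _ = (insert (p, r) {p ∈ signChangePairs y n | x' ≤ p.1}).ncard :=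
          (Set.ncard_insert_of_notMem (fun h ↦ (hpr.trans_le hrx').not_ge h.2) (hfin x')).symm
      _ ≤ {p ∈ signChangePairs y n | x ≤ p.1}.ncard :=
          Set.ncard_le_ncard (Set.insert_subset ⟨⟨hpr, hrn, hypr, hgap⟩, hxp⟩
            fun q hq ↦ ⟨hq.1, hxx'.le.trans hq.2⟩) (hfin x)

theorem IsAltChain.length_le_signChanges {y : ℕ → ℝ} {n x : ℕ} {l : List ℕ}
    (hl : IsAltChain y (x :: l)) (hn : ∀ i ∈ x :: l, i ≤ n) : l.length ≤ signChanges y n :=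
  (hl.length_le_ncard_signChangePairs hn).trans <|
    Set.ncard_le_ncard (Set.sep_subset _ _) (finite_signChangePairs y n)

section Transfer

variable {c : ℝ → ℝ} {p r : ℝ}

theorem le_or_ge_of_vanishing_between (hgap : ∀ z, p < z → z < r → c z = 0) {e : ℝ}
    (hce : c e ≠ 0) : e ≤ p ∨ r ≤ e := by
  by_contra! h
  exact hce (hgap e h.1 h.2)

theorem exists_gt_sign_change (hpr : p < r) (hc : c p * c r < 0) {e : ℝ} (hce : c e ≠ 0)
    (he : e ≤ p) : ∃ m, e < m ∧ m ≤ r ∧ c e * c m < 0 := by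
  rcases mul_neg_or_mul_neg_of_ne_zero hc hce with h | h
  · exact ⟨p, he.lt_of_ne (ne_of_mul_neg (c := c) (by linarith)), hpr.le, by linarith⟩
  · exact ⟨r, he.trans_lt hpr, le_rfl, h⟩

theorem exists_lt_sign_change (hpr : p < r) (hc : c p * c r < 0) {e : ℝ} (hce : c e ≠ 0)
    (he : r ≤ e) : ∃ m, p ≤ m ∧ m < e ∧ c m * c e < 0 := by
  rcases mul_neg_or_mul_neg_of_ne_zero hc hce with h | h
  · exact ⟨p, le_rfl, hpr.trans_le he, h⟩
  · exact ⟨r, hpr.le, he.lt_of_ne (ne_of_mul_neg (c := c) (by linarith)), by linarith⟩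

theorem IsAltChain.of_mul_sub {θ e : ℝ} {l : List ℝ}
    (hl : IsAltChain (fun x ↦ c x * (x - θ)) (e :: l)) (he : θ < e) : IsAltChain c (e :: l) := by
  induction l generalizing e with
  | nil => exact List.isChain_singleton e
  | cons e' l ih =>
    obtain ⟨⟨hee', hg⟩, hl'⟩ := List.isChain_cons_cons.1 hl
    have hpos : 0 < (e - θ) * (e' - θ) := mul_pos (by linarith) (by linarith)
    refine List.isChain_cons_cons.2 ⟨⟨hee', ?_⟩, ih hl' (he.trans hee')⟩
    nlinarith

variable (hpr : p < r) (hc : c p * c r < 0) (hgap : ∀ z, p < z → z < r → c z = 0)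
  {θ : ℝ} (hpθ : p < θ) (hθr : θ < r)
include hpr hc hgap hpθ hθr

theorem exists_isAltChain_cons_of_mul_sub {e : ℝ} {l : List ℝ}
    (hl : IsAltChain (fun x ↦ c x * (x - θ)) (e :: l)) (he : e < θ) (hce : c e ≠ 0) :
    ∃ l', IsAltChain c (e :: l') ∧ l'.length = l.length + 1 := by
  induction l generalizing e with
  | nil =>
    have hep : e ≤ p := (le_or_ge_of_vanishing_between hgap hce).resolve_right (by linarith)
    obtain ⟨m, hem, -, hcm⟩ := exists_gt_sign_change hpr hc hce hep
    exact ⟨[m], List.isChain_pair.2 ⟨hem, hcm⟩, rfl⟩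
  | cons e' l ih =>
    obtain ⟨⟨hee', hg⟩, hl'⟩ := List.isChain_cons_cons.1 hl
    have hce' : c e' ≠ 0 := by rintro h; simp [h] at hg
    rcases lt_or_gt_of_ne (show e' ≠ θ by rintro rfl; simp at hg) with he' | he'
    · have hpos : 0 < (e - θ) * (e' - θ) := mul_pos_of_neg_of_neg (by linarith) (by linarith)
      obtain ⟨l', hcl', hlen⟩ := ih hl' he' hce'
      exact ⟨e' :: l', List.isChain_cons_cons.2 ⟨⟨hee', by nlinarith⟩, hcl'⟩, by simp [hlen]⟩
    · have hneg : (e - θ) * (e' - θ) < 0 := mul_neg_of_neg_of_pos (by linarith) (by linarith)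
      have hcc : 0 < c e * c e' := by nlinarith
      have hep : e ≤ p := (le_or_ge_of_vanishing_between hgap hce).resolve_right (by linarith)
      have hre' : r ≤ e' := (le_or_ge_of_vanishing_between hgap hce').resolve_left (by linarith)
      obtain ⟨m, hem, hmr, hcm⟩ := exists_gt_sign_change hpr hc hce hep
      have hme' : c m * c e' < 0 := mul_neg_of_mul_neg_of_mul_pos hcm hcc
      refine ⟨m :: e' :: l, List.isChain_cons_cons.2 ⟨⟨hem, hcm⟩, ?_⟩, rfl⟩
      exact List.isChain_cons_cons.2
        ⟨⟨(hmr.trans hre').lt_of_ne (ne_of_mul_neg hme'), hme'⟩, IsAltChain.of_mul_sub hl' he'⟩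

theorem IsAltChain.exists_longer_of_mul_sub {l : List ℝ}
    (hl : IsAltChain (fun x ↦ c x * (x - θ)) l) :
    ∃ l', IsAltChain c l' ∧ l.length + 1 ≤ l'.length := by
  match l, hl with
  | [], _ | [_], _ => exact ⟨[p, r], List.isChain_pair.2 ⟨hpr, hc⟩, by simp⟩
  | e :: e' :: l, hl =>
    have hg : c e * (e - θ) ≠ 0 := by
      intro h
      have := (List.isChain_cons_cons.1 hl).1.2
      simp [h] at this
    have hce : c e ≠ 0 := left_ne_zero_of_mul hg
    rcases lt_or_gt_of_ne (sub_ne_zero.1 (right_ne_zero_of_mul hg)) with he | he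
    · obtain ⟨l', hcl', hlen⟩ :=
        exists_isAltChain_cons_of_mul_sub hpr hc hgap hpθ hθr hl he hce
      exact ⟨e :: l', hcl', by simp [hlen]⟩
    · have hre : r ≤ e := (le_or_ge_of_vanishing_between hgap hce).resolve_left (by linarith)
      obtain ⟨m, -, hme, hcm⟩ := exists_lt_sign_change hpr hc hce hre
      exact ⟨m :: e :: e' :: l, List.isChain_cons_cons.2 ⟨⟨hme, hcm⟩, hl.of_mul_sub he⟩,
        le_rfl⟩

end Transfer

theorem sum_mul_rpow_ne_zero {s : Finset ℝ} {c : ℝ → ℝ} (hsign : ∀ x y, x < y → 0 ≤ c x * c y)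
    {e : ℝ} (he : e ∈ s) (hce : c e ≠ 0) {u : ℝ} (hu : 0 < u) : ∑ x ∈ s, c x * u ^ x ≠ 0 := by
  have hnonneg (x : ℝ) : 0 ≤ c e * c x := by
    rcases lt_trichotomy e x with h | rfl | h
    · exact hsign _ _ h
    · exact mul_self_nonneg _
    · rw [mul_comm]; exact hsign _ _ h
  have hpos : 0 < c e * ∑ x ∈ s, c x * u ^ x := by
    simp_rw [mul_sum, ← mul_assoc]
    exact sum_pos' (fun x _ ↦ mul_nonneg (hnonneg x) (rpow_nonneg hu.le _))
      ⟨e, he, mul_pos (mul_self_pos.2 hce) (rpow_pos_of_pos hu _)⟩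
  exact right_ne_zero_of_mul hpos.ne'

theorem encard_zeros_le_encard_zeros_deriv_add_one {F F' : ℝ → ℝ} {s : Set ℝ}
    (hs : s.OrdConnected) (hF : ∀ x ∈ s, HasDerivAt F (F' x) x) :
    {x ∈ s | F x = 0}.encard ≤ {x ∈ s | F' x = 0}.encard + 1 := by
  rcases Set.finite_or_infinite {x ∈ s | F' x = 0} with hfin | hinf
  swap
  · simp [hinf.encard_eq]
  have hcard (T : Finset ℝ) (hT : ↑T ⊆ {x ∈ s | F x = 0}) : T.card ≤ hfin.toFinset.card + 1 :=
    Finset.card_le_of_interleaved fun x hx y hy hxy _ ↦ by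
      obtain ⟨hxs, hFx⟩ := hT hx
      obtain ⟨hys, hFy⟩ := hT hy
      have hIcc := hs.out hxs hys
      obtain ⟨z, hz, hF'z⟩ := exists_hasDerivAt_eq_zero hxy
        (fun w hw ↦ (hF w (hIcc hw)).continuousAt.continuousWithinAt) (hFx.trans hFy.symm)
        (fun w hw ↦ hF w (hIcc (Set.Ioo_subset_Icc_self hw)))
      exact ⟨z, hfin.mem_toFinset.2 ⟨hIcc (Set.Ioo_subset_Icc_self hz), hF'z⟩, hz⟩
  rw [hfin.encard_eq_coe_toFinset_card]
  by_contra! h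
  obtain ⟨t, hts, ht⟩ := Set.exists_subset_encard_eq (Order.add_one_le_of_lt h)
  have htfin : t.Finite := Set.finite_of_encard_eq_coe ht
  have := hcard htfin.toFinset (by simpa using hts)
  rw [htfin.encard_eq_coe_toFinset_card] at ht
  norm_cast at ht
  omega

theorem encard_zeros_sum_rpow_le_mul_sub_add_one (s : Finset ℝ) (c : ℝ → ℝ) (θ : ℝ) :
    {u ∈ Set.Ioi (0 : ℝ) | ∑ e ∈ s, c e * u ^ e = 0}.encard ≤
      {u ∈ Set.Ioi (0 : ℝ) | ∑ e ∈ s, c e * (e - θ) * u ^ e = 0}.encard + 1 := by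
  set F : ℝ → ℝ := fun u ↦ ∑ e ∈ s, c e * u ^ (e - θ)
  set F' : ℝ → ℝ := fun u ↦ ∑ e ∈ s, c e * ((e - θ) * u ^ (e - θ - 1))
  have hF (u : ℝ) (hu : u ∈ Set.Ioi 0) : HasDerivAt F (F' u) u :=
    HasDerivAt.fun_sum fun e _ ↦ (hasDerivAt_rpow_const (Or.inl (ne_of_gt hu))).const_mul (c e)
  have hFeq (u : ℝ) (hu : u ∈ Set.Ioi 0) : ∑ e ∈ s, c e * u ^ e = 0 ↔ F u = 0 := by
    have : F u = (∑ e ∈ s, c e * u ^ e) / u ^ θ := by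
      simp_rw [F, sum_div, rpow_sub hu, mul_div_assoc]
    rw [this, div_eq_zero_iff, or_iff_left (rpow_pos_of_pos hu θ).ne']
  have hF'eq (u : ℝ) (hu : u ∈ Set.Ioi 0) : ∑ e ∈ s, c e * (e - θ) * u ^ e = 0 ↔ F' u = 0 := by
    have : F' u = (∑ e ∈ s, c e * (e - θ) * u ^ e) / u ^ (θ + 1) := by
      simp_rw [F', sum_div, sub_sub, rpow_sub hu, mul_div_assoc, mul_assoc]
    rw [this, div_eq_zero_iff, or_iff_left (rpow_pos_of_pos hu _).ne']
  rw [Set.sep_ext_iff.2 hFeq, Set.sep_ext_iff.2 hF'eq]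
  exact encard_zeros_le_encard_zeros_deriv_add_one Set.ordConnected_Ioi hF

theorem encard_zeros_sum_rpow_le_of_isAltChain {s : Finset ℝ} {c : ℝ → ℝ}
    (hcs : Function.support c ⊆ s) (hc : ∃ e ∈ s, c e ≠ 0) {k : ℕ}
    (hk : ∀ l, IsAltChain c l → l.length ≤ k + 1) :
    {u ∈ Set.Ioi (0 : ℝ) | ∑ e ∈ s, c e * u ^ e = 0}.encard ≤ k := by
  induction k using Nat.strong_induction_on generalizing c with
  | _ k ih =>
  obtain ⟨e₀, he₀, hce₀⟩ := hc
  by_cases hsign : ∀ x y, x < y → 0 ≤ c x * c y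
  · have hempty : {u ∈ Set.Ioi (0 : ℝ) | ∑ e ∈ s, c e * u ^ e = 0} = ∅ :=
      Set.eq_empty_of_forall_notMem fun u hu ↦ sum_mul_rpow_ne_zero hsign he₀ hce₀ hu.1 hu.2
    rw [hempty, Set.encard_empty]
    exact zero_le
  push Not at hsign
  obtain ⟨x, y, hxy, hcxy⟩ := hsign
  obtain ⟨p, r, -, hpr, -, hc, hgap⟩ :=
    exists_adjacent_sign_change s (fun z _ _ hz ↦ hcs hz) hxy hcxy
  obtain ⟨k, rfl⟩ : ∃ k', k = k' + 1 := by
    have := hk [p, r] (List.isChain_pair.2 ⟨hpr, hc⟩)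
    exact ⟨k - 1, by simp at this; omega⟩
  obtain ⟨θ, hpθ, hθr⟩ := exists_between hpr
  have hcp : c p ≠ 0 := left_ne_zero_of_mul hc.ne
  calc _ ≤ {u ∈ Set.Ioi (0 : ℝ) | ∑ e ∈ s, c e * (e - θ) * u ^ e = 0}.encard + 1 :=
        encard_zeros_sum_rpow_le_mul_sub_add_one s c θ
    _ ≤ k + 1 := by
      gcongr
      refine ih k (Nat.lt_succ_self k) (c := fun e ↦ c e * (e - θ))
        (fun e he ↦ hcs (left_ne_zero_of_mul he)) ⟨p, hcs hcp, mul_ne_zero hcp (by linarith)⟩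
        fun l hl ↦ ?_
      obtain ⟨l', hl', hlen⟩ := IsAltChain.exists_longer_of_mul_sub hpr hc hgap hpθ hθr hl
      have := hk l' hl'
      omega

theorem exists_mul_pos_of_sum_mul_ne_zero {ι : Type*} {t : Finset ι} {w y : ι → ℝ}
    (hw : ∀ i ∈ t, 0 < w i) (h : ∑ i ∈ t, w i * y i ≠ 0) :
    ∃ i ∈ t, 0 < y i * ∑ j ∈ t, w j * y j := by
  by_contra! hle
  have : (∑ j ∈ t, w j * y j) * ∑ j ∈ t, w j * y j ≤ 0 := by
    rw [sum_mul]
    exact sum_nonpos fun i hi ↦ by nlinarith [hle i hi, hw i hi]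
  exact h (mul_self_eq_zero.1 (le_antisymm this (mul_self_nonneg _)))

theorem IsAltChain.exists_isAltChain_of_fiber_sum {n : ℕ} {w y β : ℕ → ℝ}
    (hw : ∀ i ≤ n, 0 < w i) (hβ : MonotoneOn β (Set.Iic n)) {l : List ℝ}
    (hl : IsAltChain (fun e ↦ ∑ i ∈ range (n + 1) with β i = e, w i * y i) l) :
    ∃ l' : List ℕ, IsAltChain y l' ∧ l'.length = l.length ∧ ∀ i ∈ l', i ≤ n := by
  set c : ℝ → ℝ := fun e ↦ ∑ i ∈ range (n + 1) with β i = e, w i * y i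
  have hpick (e : ℝ) : ∃ i ≤ n, c e ≠ 0 → β i = e ∧ 0 < y i * c e := by
    by_cases he : c e = 0
    · exact ⟨0, Nat.zero_le n, fun h ↦ absurd he h⟩
    obtain ⟨i, hi, hpos⟩ := exists_mul_pos_of_sum_mul_ne_zero
      (fun i hi ↦ hw i (Nat.lt_succ_iff.1 (mem_range.1 (mem_filter.1 hi).1))) he
    exact ⟨i, Nat.lt_succ_iff.1 (mem_range.1 (mem_filter.1 hi).1),
      fun _ ↦ ⟨(mem_filter.1 hi).2, hpos⟩⟩
  choose ι hιn hι using hpick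
  refine ⟨l.map ι, ?_, List.length_map _, by simpa using fun e _ ↦ hιn e⟩
  refine (List.isChain_map ι).2 (List.IsChain.imp (fun e e' ⟨hee', hcc⟩ ↦ ?_) hl)
  obtain ⟨hβe, hye⟩ := hι e (left_ne_zero_of_mul hcc.ne)
  obtain ⟨hβe', hye'⟩ := hι e' (right_ne_zero_of_mul hcc.ne)
  refine ⟨lt_of_not_ge fun h ↦ ?_, ?_⟩
  · have := hβ (hιn e') (hιn e) h
    rw [hβe, hβe'] at this
    exact this.not_gt hee'
  · have := mul_pos hye hye'
    nlinarith

theorem ncard_zeros_sum_rpow_le_signChanges {n : ℕ} {w y β : ℕ → ℝ}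
    (hw : ∀ i ≤ n, 0 < w i) (hβ : MonotoneOn β (Set.Iic n)) :
    {u ∈ Set.Ioi (0 : ℝ) | ∑ i ∈ range (n + 1), w i * y i * u ^ β i = 0}.ncard ≤
      signChanges y n := by
  classical
  set c : ℝ → ℝ := fun e ↦ ∑ i ∈ range (n + 1) with β i = e, w i * y i
  set s := (range (n + 1)).image β
  have hsum (u : ℝ) : ∑ i ∈ range (n + 1), w i * y i * u ^ β i = ∑ e ∈ s, c e * u ^ e := by
    rw [← sum_fiberwise_of_maps_to (g := β) (t := s) fun i hi ↦ mem_image_of_mem β hi]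
    refine sum_congr rfl fun e _ ↦ ?_
    rw [sum_mul]
    exact sum_congr rfl fun i hi ↦ by rw [(mem_filter.1 hi).2]
  simp_rw [hsum]
  by_cases hc : ∃ e ∈ s, c e ≠ 0
  · have hcs : Function.support c ⊆ s := fun e he ↦ by
      obtain ⟨i, hi, -⟩ := exists_ne_zero_of_sum_ne_zero he
      exact mem_image.2 ⟨i, (mem_filter.1 hi).1, (mem_filter.1 hi).2⟩
    have hk (l : List ℝ) (hl : IsAltChain c l) : l.length ≤ signChanges y n + 1 := by
      obtain ⟨l', hl', hlen, hln⟩ := hl.exists_isAltChain_of_fiber_sum hw hβ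
      match l', hl', hln with
      | [], _, _ => simp at hlen; omega
      | x :: l', hl', hln => have := hl'.length_le_signChanges hln; simp at hlen; omega
    rw [Set.ncard_def]
    exact ENat.toNat_le_of_le_natCast (encard_zeros_sum_rpow_le_of_isAltChain hcs hc hk)
  · -- `f ≡ 0`, so its zero set is all of `(0, ∞)`, whose `ncard` is the junk value `0`
    push Not at hc
    have hall : {u ∈ Set.Ioi (0 : ℝ) | ∑ e ∈ s, c e * u ^ e = 0} = Set.Ioi 0 :=
      Set.sep_eq_self_iff_mem_true.2 fun u _ ↦ sum_eq_zero fun e he ↦ by simp [hc e he]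
    rw [hall, (Set.Ioi_infinite 0).ncard]
    exact Nat.zero_le _

theorem bijOn_sub_div_sub {a b : ℝ} (hab : a < b) :
    Set.BijOn (fun t ↦ (t - a) / (b - t)) (Set.Ioo a b) (Set.Ioi 0) := by
  refine ⟨fun t ht ↦ div_pos (sub_pos.2 ht.1) (sub_pos.2 ht.2), fun t ht t' ht' h ↦ ?_,
    fun u (hu : 0 < u) ↦ ⟨(a + b * u) / (1 + u), ?_, ?_⟩⟩
  · have h1 := sub_pos.2 ht.2
    have h2 := sub_pos.2 ht'.2
    rw [div_eq_div_iff h1.ne' h2.ne'] at h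
    nlinarith
  · constructor
    · rw [lt_div_iff₀ (by linarith)]; nlinarith
    · rw [div_lt_iff₀ (by linarith)]; nlinarith
  · have h1 : (a + b * u) / (1 + u) - a = (b - a) * u / (1 + u) := by field_simp; ring
    have h2 : b - (a + b * u) / (1 + u) = (b - a) / (1 + u) := by field_simp; ring
    have hba : b - a ≠ 0 := sub_ne_zero.2 hab.ne'
    simp only [h1, h2]
    field_simp

theorem Set.BijOn.ncard_sep {α β : Type*} {f : α → β} {s : Set α} {t : Set β}
    (h : Set.BijOn f s t) (P : β → Prop) : {x ∈ s | P (f x)}.ncard = {y ∈ t | P y}.ncard := by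
  rw [← (h.injOn.mono (Set.sep_subset _ _)).ncard_image]
  congr 1
  ext y
  constructor
  · rintro ⟨x, ⟨hx, hP⟩, rfl⟩
    exact ⟨h.mapsTo hx, hP⟩
  · rintro ⟨hy, hP⟩
    obtain ⟨x, hx, rfl⟩ := h.surjOn hy
    exact ⟨x, ⟨hx, hP⟩, rfl⟩

theorem rpow_mul_rpow_sub_eq {x z : ℝ} (hx : 0 ≤ x) (hz : 0 < z) (d e : ℝ) :
    x ^ d * z ^ (e - d) = z ^ e * (x / z) ^ d := by
  rw [div_rpow hx hz.le, rpow_sub hz]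
  field_simp

theorem gt_bezier_descartes_bound_general (n q : ℕ) (a c ω y : ℕ → ℝ)
    (hq : 0 < q) (ha : a 0 < a n)
    (hmono : ∀ i j, i ≤ j → j ≤ n → a i ≤ a j)
    (hc : ∀ i, i ≤ n → 0 < c i) (hw : ∀ i, i ≤ n → 0 < ω i) :
    Set.ncard {t ∈ Set.Ioo (a 0) (a n) |
        ∑ i ∈ Finset.range (n + 1),
          ω i * c i * y i * ((t - a 0) ^ (a i - a 0) * (a n - t) ^ (a n - a i)) = 0} ≤
      Set.ncard {t ∈ Set.Ioo (a 0) (a n) |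
        ∑ i ∈ Finset.range (n + 1),
          ω i * c i * y i *
            (((t - a 0) / (a n - t)) ^ ((q : ℝ)⁻¹)) ^ ((q : ℝ) * (a i - a 0)) = 0} ∧
    Set.ncard {t ∈ Set.Ioo (a 0) (a n) |
        ∑ i ∈ Finset.range (n + 1),
          ω i * c i * y i * ((t - a 0) ^ (a i - a 0) * (a n - t) ^ (a n - a i)) = 0} ≤
      signChanges y n := by
  set P : ℝ → Prop := fun v ↦ ∑ i ∈ range (n + 1), ω i * c i * y i * v ^ (a i - a 0) = 0
  have hbern (t : ℝ) (ht : t ∈ Set.Ioo (a 0) (a n)) :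
      ∑ i ∈ range (n + 1), ω i * c i * y i * ((t - a 0) ^ (a i - a 0) * (a n - t) ^ (a n - a i))
        = 0 ↔ P ((t - a 0) / (a n - t)) := by
    have hz : 0 < a n - t := sub_pos.2 ht.2
    have hterm (i : ℕ) : (t - a 0) ^ (a i - a 0) * (a n - t) ^ (a n - a i) =
        (a n - t) ^ (a n - a 0) * ((t - a 0) / (a n - t)) ^ (a i - a 0) := by
      rw [← rpow_mul_rpow_sub_eq (sub_pos.2 ht.1).le hz]
      ring_nf
    simp_rw [hterm, mul_left_comm _ ((a n - t) ^ (a n - a 0)), ← mul_sum,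
      mul_eq_zero, (rpow_pos_of_pos hz _).ne', false_or, P]
  have hsubst (t : ℝ) (ht : t ∈ Set.Ioo (a 0) (a n)) :
      ∑ i ∈ range (n + 1), ω i * c i * y i *
        (((t - a 0) / (a n - t)) ^ ((q : ℝ)⁻¹)) ^ ((q : ℝ) * (a i - a 0)) = 0 ↔
        P ((t - a 0) / (a n - t)) := by
    have hv : 0 ≤ (t - a 0) / (a n - t) := div_nonneg (sub_pos.2 ht.1).le (sub_pos.2 ht.2).le
    simp_rw [← rpow_mul hv, inv_mul_cancel_left₀ (Nat.cast_ne_zero.2 hq.ne' : (q : ℝ) ≠ 0), P]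
  rw [Set.sep_ext_iff.2 hbern, Set.sep_ext_iff.2 hsubst, (bijOn_sub_div_sub ha).ncard_sep P]
  exact ⟨le_rfl, ncard_zeros_sum_rpow_le_signChanges (fun i hi ↦ mul_pos (hw i hi) (hc i hi))
    fun i hi j hj hij ↦ sub_le_sub_right (hmono i j hij hj) _⟩

theorem gt_bezier_descartes_bound (n q : ℕ) (a c ω y : ℕ → ℝ)
    (hq : 0 < q) (ha : a 0 < a n)
    (hmono : ∀ i j, i ≤ j → j ≤ n → a i ≤ a j)
    (hc : ∀ i, i ≤ n → 0 < c i) (hw : ∀ i, i ≤ n → 0 < ω i)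
    (hrat : ∀ i, i ≤ n → ∃ m : ℕ, (m : ℝ) = (q : ℝ) * (a i - a 0)) :
    Set.ncard {t ∈ Set.Ioo (a 0) (a n) |
        ∑ i ∈ Finset.range (n + 1),
          ω i * c i * y i * ((t - a 0) ^ (a i - a 0) * (a n - t) ^ (a n - a i)) = 0} ≤
      Set.ncard {t ∈ Set.Ioo (a 0) (a n) |
        ∑ i ∈ Finset.range (n + 1),
          ω i * c i * y i *
            (((t - a 0) / (a n - t)) ^ ((q : ℝ)⁻¹)) ^ ((q : ℝ) * (a i - a 0)) = 0} ∧
    Set.ncard {t ∈ Set.Ioo (a 0) (a n) |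
        ∑ i ∈ Finset.range (n + 1),
          ω i * c i * y i * ((t - a 0) ^ (a i - a 0) * (a n - t) ^ (a n - a i)) = 0} ≤
      signChanges y n :=
  gt_bezier_descartes_bound_general n q a c ω y hq ha hmono hc hw
end

section
/- Corner interpolation for GT-Bézier surfaces: if V is a vertex of Δ that belongs to the knot set 𝒜, then T_a(V) = 1 for a = V and T_a(V) = 0 for every other knot a ∈ 𝒜 \ {V}; consequently the GT-Bézier surface satisfies P(V) = b_V. -/
open Real Finset

/-! At a vertex `V` every factor of `β_V(V)` has the form `x ^ x` with `x ≥ 0`, which is positive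
(`0 ^ 0 = 1`), so `β_V(V) > 0`. For any other knot `a`, one of the two edge functions vanishing at
`V` is positive at `a`, so `β_a(V)` contains a factor `0 ^ h_j(a) = 0`. Hence the weights
`ω_a β_a(V)` are concentrated at `a = V`, and normalising them gives the Kronecker delta. -/

theorem Real.rpow_self_pos {x : ℝ} (hx : 0 ≤ x) : 0 < x ^ x := by
  rcases hx.eq_or_lt with rfl | hx
  · simp
  · exact rpow_pos_of_pos hx x

theorem Finset.prod_rpow_self_pos {ι : Type*} {s : Finset ι} {f : ι → ℝ}
    (hf : ∀ i ∈ s, 0 ≤ f i) : 0 < ∏ i ∈ s, f i ^ f i :=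
  prod_pos fun i hi => rpow_self_pos (hf i hi)

theorem Finset.prod_rpow_eq_zero {ι : Type*} {s : Finset ι} {f g : ι → ℝ} {j : ι}
    (hj : j ∈ s) (hfj : f j = 0) (hgj : g j ≠ 0) : ∏ i ∈ s, f i ^ g i = 0 :=
  prod_eq_zero hj (by rw [hfj, zero_rpow hgj])

theorem Finset.div_sum_eq_one_of_eq_zero {ι K : Type*} [DivisionSemiring K]
    {s : Finset ι} {w : ι → K} {i : ι} (hi : i ∈ s)
    (hw : ∀ j ∈ s, j ≠ i → w j = 0) (hwi : w i ≠ 0) :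
    w i / ∑ j ∈ s, w j = 1 := by
  rw [sum_eq_single_of_mem i hi hw, div_self hwi]

theorem gt_bezier_surface_corner_interpolation_general (r : ℕ) (h : ℕ → ℝ × ℝ → ℝ)
    (A : Finset (ℝ × ℝ)) (V : ℝ × ℝ) (hV : V ∈ A)
    (j₁ j₂ : ℕ) (hj₁ : j₁ < r) (hj₂ : j₂ < r)
    (hV₁ : h j₁ V = 0) (hV₂ : h j₂ V = 0)
    (hA : ∀ a ∈ A, ∀ k, k < r → 0 ≤ h k a)
    (hsep : ∀ a ∈ A, a ≠ V → 0 < h j₁ a ∨ 0 < h j₂ a)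
    (c ω : ℝ × ℝ → ℝ) (hc : ∀ a ∈ A, 0 < c a) (hω : ∀ a ∈ A, 0 < ω a)
    (b : ℝ × ℝ → Fin 3 → ℝ)
    (β : ℝ × ℝ → ℝ × ℝ → ℝ)
    (hβ : ∀ a p, β a p = c a * ∏ k ∈ Finset.range r, h k p ^ (h k a))
    (T : ℝ × ℝ → ℝ × ℝ → ℝ)
    (hT : ∀ a p, T a p = ω a * β a p / ∑ a' ∈ A, ω a' * β a' p) :
    T V V = 1 ∧ (∀ a ∈ A, a ≠ V → T a V = 0) ∧
      (∑ a ∈ A, T a V • b a) = b V := by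
  have hβV : 0 < β V V := by
    rw [hβ]
    exact mul_pos (hc V hV) (prod_rpow_self_pos fun k hk => hA V hV k (mem_range.mp hk))
  have hβ_other : ∀ a ∈ A, a ≠ V → β a V = 0 := by
    intro a ha haV
    rw [hβ]
    rcases hsep a ha haV with hpos | hpos
    · rw [prod_rpow_eq_zero (mem_range.mpr hj₁) hV₁ hpos.ne', mul_zero]
    · rw [prod_rpow_eq_zero (mem_range.mpr hj₂) hV₂ hpos.ne', mul_zero]
  have hTV : T V V = 1 := by
    rw [hT]
    exact div_sum_eq_one_of_eq_zero (w := fun a => ω a * β a V) hV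
      (fun a ha haV => by rw [hβ_other a ha haV, mul_zero]) (mul_pos (hω V hV) hβV).ne'
  have hT_other : ∀ a ∈ A, a ≠ V → T a V = 0 := fun a ha haV => by
    rw [hT, hβ_other a ha haV, mul_zero, zero_div]
  refine ⟨hTV, hT_other, ?_⟩
  rw [sum_eq_single_of_mem V hV fun a ha haV => by rw [hT_other a ha haV, zero_smul], hTV, one_smul]

theorem gt_bezier_surface_corner_interpolation (r : ℕ) (h : ℕ → ℝ × ℝ → ℝ)
    (A : Finset (ℝ × ℝ)) (V : ℝ × ℝ) (hV : V ∈ A)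
    (j₁ j₂ : ℕ) (hj₁ : j₁ < r) (hj₂ : j₂ < r) (hjne : j₁ ≠ j₂)
    (hV₁ : h j₁ V = 0) (hV₂ : h j₂ V = 0)
    (hVpos : ∀ k, k < r → k ≠ j₁ → k ≠ j₂ → 0 < h k V)
    (hA : ∀ a ∈ A, ∀ k, k < r → 0 ≤ h k a)
    (hsep : ∀ a ∈ A, a ≠ V → 0 < h j₁ a ∨ 0 < h j₂ a)
    (c ω : ℝ × ℝ → ℝ) (hc : ∀ a ∈ A, 0 < c a) (hω : ∀ a ∈ A, 0 < ω a)
    (b : ℝ × ℝ → Fin 3 → ℝ)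
    (β : ℝ × ℝ → ℝ × ℝ → ℝ)
    (hβ : ∀ a p, β a p = c a * ∏ k ∈ Finset.range r, h k p ^ (h k a))
    (T : ℝ × ℝ → ℝ × ℝ → ℝ)
    (hT : ∀ a p, T a p = ω a * β a p / ∑ a' ∈ A, ω a' * β a' p) :
    T V V = 1 ∧ (∀ a ∈ A, a ≠ V → T a V = 0) ∧
      (∑ a ∈ A, T a V • b a) = b V :=
  gt_bezier_surface_corner_interpolation_general r h A V hV j₁ j₂ hj₁ hj₂ hV₁ hV₂ hA hsep c ω hc hω
    b β hβ T hT
end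

section
/- Toric degeneration of a GT-Bézier curve at a point lifted strictly above: let λ : {a_0,…,a_n} → ℝ be a lifting function and fix t ∈ (a_0, a_n). Let M = max_i λ(a_i) and S = {i : λ(a_i) = M}. Then as x → +∞, P_x(t) = (Σ_i x^{λ(a_i)} ω_i b_i β_{a_i}(t))/(Σ_i x^{λ(a_i)} ω_i β_{a_i}(t)) converges to (Σ_{i∈S} ω_i b_i β_{a_i}(t))/(Σ_{i∈S} ω_i β_{a_i}(t)). -/
/-!
The point `P_x(t)` is the `Finset.centerMass` of the control points with weights
`x ^ λ(aᵢ) ωᵢ βᵢ(t)`. Dividing all weights by `x ^ M` does not change the center of mass and turns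
the weight of control point `i` into `x ^ (λ(aᵢ) - M) ωᵢ βᵢ(t)`. As `x → ∞` this tends to
`ωᵢ βᵢ(t)` for `i ∈ S` and to `0` otherwise; the limiting total weight is positive because every
`βᵢ(t)` is positive inside `(a₀, aₙ)`, so the center of mass converges to the one over `S`.
-/

open Real Finset Filter
open scoped Classical Topology

namespace Finset

variable {ι R E : Type*} [Field R] [AddCommGroup E] [Module R E]

theorem centerMass_const_mul_left (t : Finset ι) {c : R} (hc : c ≠ 0) (w : ι → R) (z : ι → E) :
    t.centerMass (fun i => c * w i) z = t.centerMass w z := by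
  simp only [centerMass, ← mul_sum, mul_inv_rev, mul_smul, ← smul_sum, inv_smul_smul₀ hc]

theorem centerMass_filter_eq_ite (t : Finset ι) (p : ι → Prop) [DecidablePred p] (w : ι → R)
    (z : ι → E) :
    (t.filter p).centerMass w z = t.centerMass (fun i => if p i then w i else 0) z := by
  simp only [centerMass, sum_filter, ite_smul, zero_smul]

end Finset

theorem Filter.Tendsto.finset_centerMass {α ι R E : Type*} [Field R] [TopologicalSpace R]
    [ContinuousAdd R] [ContinuousInv₀ R] [AddCommGroup E] [Module R E] [TopologicalSpace E]
    [ContinuousAdd E] [ContinuousSMul R E] {f : Filter α} {t : Finset ι} {w : α → ι → R}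
    {w₀ : ι → R} (hw : ∀ i ∈ t, Tendsto (fun x => w x i) f (𝓝 (w₀ i)))
    (hw₀ : ∑ i ∈ t, w₀ i ≠ 0) (z : ι → E) :
    Tendsto (fun x => t.centerMass (w x) z) f (𝓝 (t.centerMass w₀ z)) :=
  ((tendsto_finsetSum t hw).inv₀ hw₀).smul
    (tendsto_finsetSum t fun i hi => (hw i hi).smul_const (z i))

theorem tendsto_rpow_sub_atTop {l M : ℝ} (hl : l ≤ M) :
    Tendsto (fun x : ℝ => x ^ (l - M)) atTop (𝓝 (if l = M then 1 else 0)) := by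
  rcases hl.eq_or_lt with rfl | hlt
  · simpa only [sub_self, rpow_zero, if_true] using tendsto_const_nhds
  · simpa only [hlt.ne, if_false, neg_sub] using tendsto_rpow_neg_atTop (sub_pos.2 hlt)

theorem tendsto_centerMass_rpow_mul_atTop {ι E : Type*} [AddCommGroup E] [Module ℝ E]
    [TopologicalSpace E] [ContinuousAdd E] [ContinuousSMul ℝ E] {t : Finset ι} {l w : ι → ℝ}
    {M : ℝ} (hl : ∀ i ∈ t, l i ≤ M) (hw : ∑ i ∈ t.filter (fun i => l i = M), w i ≠ 0)
    (z : ι → E) :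
    Tendsto (fun x : ℝ => t.centerMass (fun i => x ^ l i * w i) z) atTop
      (𝓝 ((t.filter fun i => l i = M).centerMass w z)) := by
  have hlim : Tendsto (fun x : ℝ => t.centerMass (fun i => x ^ (l i - M) * w i) z) atTop
      (𝓝 ((t.filter fun i => l i = M).centerMass w z)) := by
    rw [centerMass_filter_eq_ite]
    refine Tendsto.finset_centerMass (fun i hi => ?_) (by rwa [← sum_filter]) z
    simpa only [ite_mul, one_mul, zero_mul] using
      (tendsto_rpow_sub_atTop (hl i hi)).mul_const (w i)
  refine hlim.congr' ?_
  filter_upwards [eventually_gt_atTop 0] with x hx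
  rw [← centerMass_const_mul_left t (rpow_pos_of_pos hx M).ne']
  congr 1
  ext i
  rw [← mul_assoc, ← rpow_add hx, add_sub_cancel]

theorem gt_bezier_toric_degeneration_pointwise_general (n d : ℕ) (a c ω l : ℕ → ℝ)
    (b : ℕ → Fin d → ℝ) (M : ℝ)
    (hc : ∀ i, i ≤ n → 0 < c i) (hw : ∀ i, i ≤ n → 0 < ω i)
    (hM : IsGreatest (l '' {i | i ≤ n}) M)
    (β : ℕ → ℝ → ℝ)
    (hβ : ∀ i t, β i t = c i * (t - a 0) ^ (a i - a 0) * (a n - t) ^ (a n - a i))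
    (t : ℝ) (ht : t ∈ Set.Ioo (a 0) (a n)) :
    Filter.Tendsto
      (fun x : ℝ =>
        (∑ i ∈ Finset.range (n + 1), x ^ (l i) * ω i * β i t)⁻¹ •
          ∑ i ∈ Finset.range (n + 1), (x ^ (l i) * ω i * β i t) • b i)
      Filter.atTop
      (nhds
        ((∑ i ∈ (Finset.range (n + 1)).filter (fun i => l i = M), ω i * β i t)⁻¹ •
          ∑ i ∈ (Finset.range (n + 1)).filter (fun i => l i = M),
            (ω i * β i t) • b i)) := by
  have hweight : ∀ i ∈ range (n + 1), 0 < ω i * β i t := fun i hi => by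
    have hin : i ≤ n := mem_range_succ_iff.1 hi
    rw [hβ]
    exact mul_pos (hw i hin) (mul_pos (mul_pos (hc i hin) (rpow_pos_of_pos (sub_pos.2 ht.1) _))
      (rpow_pos_of_pos (sub_pos.2 ht.2) _))
  obtain ⟨i₀, hi₀, hi₀M⟩ := hM.1
  have hmass : ∑ i ∈ (range (n + 1)).filter (fun i => l i = M), ω i * β i t ≠ 0 :=
    (sum_pos (fun i hi => hweight i (mem_filter.1 hi).1)
      ⟨i₀, mem_filter.2 ⟨mem_range_succ_iff.2 hi₀, hi₀M⟩⟩).ne'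
  have hle : ∀ i ∈ range (n + 1), l i ≤ M := fun i hi =>
    hM.2 ⟨i, mem_range_succ_iff.1 hi, rfl⟩
  simpa only [centerMass, mul_assoc] using tendsto_centerMass_rpow_mul_atTop hle hmass b

theorem gt_bezier_toric_degeneration_pointwise (n d : ℕ) (a c ω l : ℕ → ℝ)
    (b : ℕ → Fin d → ℝ) (M : ℝ)
    (ha : a 0 < a n)
    (hmono : ∀ i j, i ≤ j → j ≤ n → a i ≤ a j)
    (hc : ∀ i, i ≤ n → 0 < c i) (hw : ∀ i, i ≤ n → 0 < ω i)
    (hM : IsGreatest (l '' {i | i ≤ n}) M)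
    (β : ℕ → ℝ → ℝ)
    (hβ : ∀ i t, β i t = c i * (t - a 0) ^ (a i - a 0) * (a n - t) ^ (a n - a i))
    (t : ℝ) (ht : t ∈ Set.Ioo (a 0) (a n)) :
    Filter.Tendsto
      (fun x : ℝ =>
        (∑ i ∈ Finset.range (n + 1), x ^ (l i) * ω i * β i t)⁻¹ •
          ∑ i ∈ Finset.range (n + 1), (x ^ (l i) * ω i * β i t) • b i)
      Filter.atTop
      (nhds
        ((∑ i ∈ (Finset.range (n + 1)).filter (fun i => l i = M), ω i * β i t)⁻¹ •
          ∑ i ∈ (Finset.range (n + 1)).filter (fun i => l i = M),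
            (ω i * β i t) • b i)) :=
  gt_bezier_toric_degeneration_pointwise_general n d a c ω l b M hc hw hM β hβ t ht
end
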